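/- Let (ȳ, ū, λ̄) be a KKT triple. Let P be a symmetric positive definite solution of the ARE with ‖exp(t(A − BR⁻¹BᵀP))‖ ≤ M e^{−νt} for all t ≥ 0, and let N be a symmetric negative definite solution of the ARE with ‖exp(−t(A − BR⁻¹BᵀN))‖ ≤ M e^{−νt} for all t ≥ 0, for some M ≥ 1, ν > 0. Define V_f(y₀) as the infimum of ½∫₀^∞ (‖y(t) − y_d‖²_Q + ‖u(t) − u_d‖²_R − ‖ȳ − y_d‖²_Q − ‖ū − u_d‖²_R) dt over all pairs (y, u) with y differentiable, u continuous, ẏ = Ay + Bu, y(0) = y₀, y(t) → ȳ as t → ∞, and for which the functions t ↦ ‖y(t) − ȳ‖²_Q + ‖u(t) − ū‖²_R and t ↦ ⟨Q(ȳ − y_d), y(t) − ȳ⟩ + ⟨R(ū − u_d), u(t) − ū⟩ are integrable on [0, ∞); define V_b(y₁) analogously with the backward dynamics ẏ = −Ay − Bu, y(0) = y₁, y(t) → ȳ. Then V_f(y₀) = ½⟨P(y₀ − ȳ), y₀ − ȳ⟩ − ⟨λ̄, y₀ − ȳ⟩ and V_b(y₁) = −½⟨N(y₁ − ȳ), y₁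 − ȳ⟩ + ⟨λ̄, y₁ − ȳ⟩. -/

import Mathlib

/-!
Write `e = y - ȳ`, `w = u - ū` and `V(x) = ½⟨S x, x⟩ - ⟨λ̄, x⟩` for a symmetric solution `S` of
the Riccati equation. Expanding the cost around `(ȳ, ū)`, the KKT conditions turn its linear part
into `⟨λ̄, ė⟩`, and completing the square with the Riccati equation gives, along every trajectory,
`cost(t) = ‖w + R⁻¹BᵀS e‖²_R - 2 d/dt V(e(t))`. Since `e(t) → 0`, integrating yields
`∫ cost ≥ 2 V(e(0))`, with equality for the feedback `w = -R⁻¹BᵀS e`; the stability bound on the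
closed loop makes this feedback trajectory decay exponentially, hence admissible. The backward
problem is the forward one for `(-A, -B)`, with multiplier `-λ̄` and Riccati solution `-N`.
-/

open Matrix MeasureTheory Set Filter Asymptotics Topology

section

variable {ι : Type*} [Fintype ι]

theorem HasDerivWithinAt.dotProduct {f g : ℝ → ι → ℝ} {f' g' : ι → ℝ} {s : Set ℝ} {t : ℝ}
    (hf : HasDerivWithinAt f f' s t) (hg : HasDerivWithinAt g g' s t) :
    HasDerivWithinAt (fun τ => f τ ⬝ᵥ g τ) (f' ⬝ᵥ g t + f t ⬝ᵥ g') s t :=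
  (HasDerivWithinAt.fun_sum (u := Finset.univ) fun i _ =>
    (hasDerivWithinAt_pi.1 hf i).mul (hasDerivWithinAt_pi.1 hg i)).congr_deriv
      (by rw [Finset.sum_add_distrib]; rfl)

theorem HasDerivWithinAt.const_mulVec {κ : Type*} [Fintype κ] (M : Matrix κ ι ℝ) {f : ℝ → ι → ℝ}
    {f' : ι → ℝ} {s : Set ℝ} {t : ℝ} (hf : HasDerivWithinAt f f' s t) :
    HasDerivWithinAt (fun τ => M *ᵥ f τ) (M *ᵥ f') s t :=
  (M.mulVecLin.toContinuousLinearMap).hasFDerivAt.comp_hasDerivWithinAt t hf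

theorem hasDerivAt_exp_smul_mulVec [DecidableEq ι] (K : Matrix ι ι ℝ) (x : ι → ℝ) (t : ℝ) :
    HasDerivAt (fun τ : ℝ => NormedSpace.exp (τ • K) *ᵥ x)
      (K *ᵥ (NormedSpace.exp (t • K) *ᵥ x)) t := by
  -- `exp` only sees the topology, so any normed-algebra structure can be used to differentiate it
  let _ := Matrix.linftyOpNormedRing (n := ι) (α := ℝ)
  let _ := Matrix.linftyOpNormedAlgebra (R := ℝ) (n := ι) (α := ℝ)
  let applyTo : Matrix ι ι ℝ →L[ℝ] ι → ℝ :=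
    ((LinearMap.applyₗ x).comp Matrix.toLin'.toLinearMap).toContinuousLinearMap
  have h : HasDerivAt (fun τ : ℝ => applyTo (NormedSpace.exp (τ • K)))
      (applyTo (K * NormedSpace.exp (t • K))) t :=
    applyTo.hasFDerivAt.comp_hasDerivAt t (hasDerivAt_exp_smul_const' (𝕂 := ℝ) K t)
  simp only [applyTo, LinearMap.coe_toContinuousLinearMap', LinearMap.coe_comp,
    LinearEquiv.coe_coe, Function.comp_apply, toLin'_apply, LinearMap.applyₗ_apply_apply,
    ← mulVec_mulVec] at h
  exact h

theorem Asymptotics.IsBigO.dotProduct {α : Type*} {l : Filter α} {f g : α → ι → ℝ}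
    {φ ψ : α → ℝ} (hf : f =O[l] φ) (hg : g =O[l] ψ) :
    (fun x => f x ⬝ᵥ g x) =O[l] fun x => φ x * ψ x := by
  have coord : ∀ {h : α → ι → ℝ} {χ : α → ℝ}, h =O[l] χ → ∀ i, (fun x => h x i) =O[l] χ :=
    fun hh i => (isBigO_of_le l fun x => norm_le_pi_norm _ i).trans hh
  exact IsBigO.fun_sum fun i _ => (coord hf i).mul (coord hg i)

theorem Asymptotics.IsBigO.const_mulVec {α κ : Type*} [Fintype κ] {l : Filter α} (M : Matrix κ ι ℝ)
    {f : α → ι → ℝ} {φ : α → ℝ} (hf : f =O[l] φ) : (fun x => M *ᵥ f x) =O[l] φ :=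
  ((M.mulVecLin.toContinuousLinearMap).isBigO_comp f l).trans hf

theorem Asymptotics.IsBigO.const_dotProduct {α : Type*} {l : Filter α} (c : ι → ℝ)
    {f : α → ι → ℝ} {φ : α → ℝ} (hf : f =O[l] φ) : (fun x => c ⬝ᵥ f x) =O[l] φ := by
  simpa using (isBigO_const_one ℝ c l).dotProduct hf

theorem norm_le_sqrt_dotProduct_self (x : ι → ℝ) : ‖x‖ ≤ √(x ⬝ᵥ x) := by
  refine (pi_norm_le_iff_of_nonneg (Real.sqrt_nonneg _)).2 fun i => ?_
  rw [Real.norm_eq_abs, ← Real.sqrt_sq_eq_abs]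
  exact Real.sqrt_le_sqrt (Finset.single_le_sum (f := fun j => x j * x j)
    (fun j _ => mul_self_nonneg (x j)) (Finset.mem_univ i) |>.trans_eq' (sq (x i)).symm)

theorem isBigO_exp_neg_of_sqrt_dotProduct_le {f : ℝ → ι → ℝ} {M ν c : ℝ}
    (h : ∀ t, 0 ≤ t → √(f t ⬝ᵥ f t) ≤ M * Real.exp (-ν * t) * c) :
    f =O[atTop] fun t => Real.exp (-ν * t) := by
  refine IsBigO.of_bound (M * c) <| (eventually_ge_atTop 0).mono fun t ht => ?_
  rw [Real.norm_of_nonneg (Real.exp_pos _).le]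
  calc ‖f t‖ ≤ √(f t ⬝ᵥ f t) := norm_le_sqrt_dotProduct_self (f t)
    _ ≤ M * Real.exp (-ν * t) * c := h t ht
    _ = M * c * Real.exp (-ν * t) := by ring

theorem sub_le_integral_Ioi_of_hasDerivWithinAt_of_tendsto {f f' g : ℝ → ℝ} {a m : ℝ}
    (hderiv : ∀ x ∈ Ici a, HasDerivWithinAt f (f' x) (Ici a) x)
    (hg : IntegrableOn g (Ioi a)) (hle : ∀ x ∈ Ioi a, f' x ≤ g x)
    (hf : Tendsto f atTop (𝓝 m)) : m - f a ≤ ∫ x in Ioi a, g x := by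
  refine le_of_tendsto_of_tendsto (hf.sub_const _)
    (intervalIntegral_tendsto_integral_Ioi a hg tendsto_id) ?_
  filter_upwards [eventually_ge_atTop a] with b hab
  refine intervalIntegral.sub_le_integral_of_hasDeriv_right_of_le hab
    (fun x hx => (hderiv x hx.1).continuousWithinAt.mono Icc_subset_Ici_self)
    (fun x hx => (hderiv x (le_of_lt hx.1)).mono fun y hy => le_of_lt (hx.1.trans hy))
    ((integrableOn_Icc_iff_integrableOn_Ioc).2 (hg.mono_set Ioc_subset_Ioi_self))
    fun x hx => hle x hx.1

section Symmetric

variable {α : Type*} [CommRing α] {S : Matrix ι ι α}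

theorem Matrix.IsSymm.mulVec_dotProduct_comm (hS : S.IsSymm) (a b : ι → α) :
    S *ᵥ a ⬝ᵥ b = S *ᵥ b ⬝ᵥ a := by
  rw [dotProduct_comm, dotProduct_comm (S *ᵥ b), ← dotProduct_transpose_mulVec, hS.eq]

theorem Matrix.IsSymm.mulVec_add_dotProduct_add (hS : S.IsSymm) (a b : ι → α) :
    S *ᵥ (a + b) ⬝ᵥ (a + b) = S *ᵥ a ⬝ᵥ a + 2 * (S *ᵥ b ⬝ᵥ a) + S *ᵥ b ⬝ᵥ b := by
  rw [mulVec_add, add_dotProduct, dotProduct_add, dotProduct_add, hS.mulVec_dotProduct_comm a b]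
  ring

end Symmetric

section LinearQuadratic

variable {κ : Type*} [Fintype κ]
  (A : Matrix ι ι ℝ) (B : Matrix ι κ ℝ) (Q : Matrix ι ι ℝ) (R : Matrix κ κ ℝ) (S : Matrix ι ι ℝ)
  (yd : ι → ℝ) (ud : κ → ℝ) (ybar : ι → ℝ) (ubar : κ → ℝ) (lam : ι → ℝ)

structure IsKKTTriple : Prop where
  feasible : A *ᵥ ybar + B *ᵥ ubar = 0
  state_eq : Q *ᵥ (ybar - yd) = Aᵀ *ᵥ lam
  control_eq : R *ᵥ (ubar - ud) = Bᵀ *ᵥ lam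

def shiftedCost (y : ι → ℝ) (u : κ → ℝ) : ℝ :=
  Q *ᵥ (y - yd) ⬝ᵥ (y - yd) + R *ᵥ (u - ud) ⬝ᵥ (u - ud)
    - Q *ᵥ (ybar - yd) ⬝ᵥ (ybar - yd) - R *ᵥ (ubar - ud) ⬝ᵥ (ubar - ud)

noncomputable def riccatiValue (x : ι → ℝ) : ℝ := 1 / 2 * (S *ᵥ x ⬝ᵥ x) - lam ⬝ᵥ x

def admissibleCosts (y₀ : ι → ℝ) : Set ℝ :=
  {c | ∃ (y : ℝ → ι → ℝ) (u : ℝ → κ → ℝ),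
    (∀ t ∈ Ici (0 : ℝ), HasDerivWithinAt y (A *ᵥ y t + B *ᵥ u t) (Ici 0) t) ∧
    ContinuousOn u (Ici 0) ∧ y 0 = y₀ ∧ Tendsto y atTop (𝓝 ybar) ∧
    IntegrableOn (fun t => Q *ᵥ (y t - ybar) ⬝ᵥ (y t - ybar)
      + R *ᵥ (u t - ubar) ⬝ᵥ (u t - ubar)) (Ici 0) ∧
    IntegrableOn (fun t => Q *ᵥ (ybar - yd) ⬝ᵥ (y t - ybar)
      + R *ᵥ (ubar - ud) ⬝ᵥ (u t - ubar)) (Ici 0) ∧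
    c = 1 / 2 * ∫ t in Ioi 0, shiftedCost Q R yd ud ybar ubar (y t) (u t)}

variable {A B Q R S yd ud ybar ubar lam}

theorem IsKKTTriple.neg (h : IsKKTTriple A B Q R yd ud ybar ubar lam) :
    IsKKTTriple (-A) (-B) Q R yd ud ybar ubar (-lam) where
  feasible := by simp only [neg_mulVec, ← neg_add, h.feasible, neg_zero]
  state_eq := by rw [h.state_eq, transpose_neg, neg_mulVec, mulVec_neg, neg_neg]
  control_eq := by rw [h.control_eq, transpose_neg, neg_mulVec, mulVec_neg, neg_neg]

theorem shiftedCost_eq_deviations (hQ : Q.IsSymm) (hR : R.IsSymm) (y : ι → ℝ) (u : κ → ℝ) :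
    shiftedCost Q R yd ud ybar ubar y u =
      (Q *ᵥ (y - ybar) ⬝ᵥ (y - ybar) + R *ᵥ (u - ubar) ⬝ᵥ (u - ubar))
        + 2 * (Q *ᵥ (ybar - yd) ⬝ᵥ (y - ybar) + R *ᵥ (ubar - ud) ⬝ᵥ (u - ubar)) := by
  rw [shiftedCost, ← sub_add_sub_cancel y ybar yd, ← sub_add_sub_cancel u ubar ud,
    hQ.mulVec_add_dotProduct_add, hR.mulVec_add_dotProduct_add]
  ring

theorem integrableOn_shiftedCost (hQ : Q.IsSymm) (hR : R.IsSymm) {y : ℝ → ι → ℝ}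
    {u : ℝ → κ → ℝ}
    (hquad : IntegrableOn (fun t => Q *ᵥ (y t - ybar) ⬝ᵥ (y t - ybar)
      + R *ᵥ (u t - ubar) ⬝ᵥ (u t - ubar)) (Ici 0))
    (hlin : IntegrableOn (fun t => Q *ᵥ (ybar - yd) ⬝ᵥ (y t - ybar)
      + R *ᵥ (ubar - ud) ⬝ᵥ (u t - ubar)) (Ici 0)) :
    IntegrableOn (fun t => shiftedCost Q R yd ud ybar ubar (y t) (u t)) (Ioi 0) := by
  simp only [shiftedCost_eq_deviations hQ hR]
  exact (hquad.add (hlin.const_mul 2)).mono_set Ioi_subset_Ici_self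

theorem integrableOn_deviationCosts_of_isBigO {ν : ℝ} (hν : 0 < ν) {y : ℝ → ι → ℝ}
    {u : ℝ → κ → ℝ} (hy : Continuous y) (hu : Continuous u)
    (hyO : (fun t => y t - ybar) =O[atTop] fun t => Real.exp (-ν * t))
    (huO : (fun t => u t - ubar) =O[atTop] fun t => Real.exp (-ν * t)) :
    IntegrableOn (fun t => Q *ᵥ (y t - ybar) ⬝ᵥ (y t - ybar)
      + R *ᵥ (u t - ubar) ⬝ᵥ (u t - ubar)) (Ici 0) ∧
    IntegrableOn (fun t => Q *ᵥ (ybar - yd) ⬝ᵥ (y t - ybar)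
      + R *ᵥ (ubar - ud) ⬝ᵥ (u t - ubar)) (Ici 0) := by
  have hexp : (fun t => Real.exp (-ν * t) * Real.exp (-ν * t)) =
      fun t => Real.exp (-(2 * ν) * t) := by
    funext t; rw [← Real.exp_add]; ring_nf
  refine ⟨(integrableOn_Ici_iff_integrableOn_Ioi (by finiteness)).2 <|
      integrable_of_isBigO_exp_neg (mul_pos two_pos hν) (by fun_prop) ?_,
    (integrableOn_Ici_iff_integrableOn_Ioi (by finiteness)).2 <|
      integrable_of_isBigO_exp_neg hν (by fun_prop)
        ((hyO.const_dotProduct _).add (huO.const_dotProduct _))⟩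
  rw [← hexp]
  exact ((hyO.const_mulVec Q).dotProduct hyO).add ((huO.const_mulVec R).dotProduct huO)

variable [DecidableEq κ]

theorem riccati_complete_square (hR : R.IsSymm) (hRdet : IsUnit R.det) (hS : S.IsSymm)
    (hARE : Aᵀ * S + S * A - S * B * R⁻¹ * Bᵀ * S = -Q) (e : ι → ℝ) (w : κ → ℝ) :
    Q *ᵥ e ⬝ᵥ e + R *ᵥ w ⬝ᵥ w + 2 * (S *ᵥ e ⬝ᵥ (A *ᵥ e + B *ᵥ w)) =
      R *ᵥ (w + (R⁻¹ * Bᵀ * S) *ᵥ e) ⬝ᵥ (w + (R⁻¹ * Bᵀ * S) *ᵥ e) := by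
  set p := (R⁻¹ * Bᵀ * S) *ᵥ e
  have hRp : R *ᵥ p = Bᵀ *ᵥ (S *ᵥ e) := by
    rw [mulVec_mulVec, ← Matrix.mul_assoc, ← Matrix.mul_assoc, mul_nonsing_inv _ hRdet,
      Matrix.one_mul, ← mulVec_mulVec]
  have hQ : Q = S * B * (R⁻¹ * Bᵀ * S) - (Aᵀ * S + S * A) := by
    rw [← neg_eq_iff_eq_neg.mpr hARE, neg_sub]; simp only [Matrix.mul_assoc]
  have hgain : (S * B * (R⁻¹ * Bᵀ * S)) *ᵥ e ⬝ᵥ e = R *ᵥ p ⬝ᵥ p :=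
    calc (S * B * (R⁻¹ * Bᵀ * S)) *ᵥ e ⬝ᵥ e = S *ᵥ (B *ᵥ p) ⬝ᵥ e := by
          simp only [p, mulVec_mulVec, Matrix.mul_assoc]
      _ = p ⬝ᵥ Bᵀ *ᵥ (S *ᵥ e) := by
          rw [hS.mulVec_dotProduct_comm, dotProduct_transpose_mulVec]
      _ = R *ᵥ p ⬝ᵥ p := by rw [hRp, dotProduct_comm]
  have hAS : (Aᵀ * S) *ᵥ e ⬝ᵥ e = S *ᵥ e ⬝ᵥ A *ᵥ e := by
    rw [← mulVec_mulVec, dotProduct_comm, dotProduct_transpose_mulVec]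
  have hSA : (S * A) *ᵥ e ⬝ᵥ e = S *ᵥ e ⬝ᵥ A *ᵥ e := by
    rw [← mulVec_mulVec, hS.mulVec_dotProduct_comm]
  have hQe : Q *ᵥ e ⬝ᵥ e = R *ᵥ p ⬝ᵥ p - 2 * (S *ᵥ e ⬝ᵥ A *ᵥ e) := by
    rw [hQ, sub_mulVec, add_mulVec, sub_dotProduct, add_dotProduct, hgain, hAS, hSA]
    ring
  have hcross : R *ᵥ p ⬝ᵥ w = S *ᵥ e ⬝ᵥ B *ᵥ w := by
    rw [hRp, dotProduct_comm, dotProduct_transpose_mulVec]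
  rw [hR.mulVec_add_dotProduct_add, hQe, hcross, dotProduct_add]
  ring

theorem shiftedCost_eq_completedSquare (hQ : Q.IsSymm) (hR : R.PosDef) (hS : S.IsSymm)
    (hARE : Aᵀ * S + S * A - S * B * R⁻¹ * Bᵀ * S = -Q)
    (hKKT : IsKKTTriple A B Q R yd ud ybar ubar lam) (y : ι → ℝ) (u : κ → ℝ) :
    shiftedCost Q R yd ud ybar ubar y u =
      R *ᵥ (u - ubar + (R⁻¹ * Bᵀ * S) *ᵥ (y - ybar)) ⬝ᵥ (u - ubar + (R⁻¹ * Bᵀ * S) *ᵥ (y - ybar))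
        - 2 * ((S *ᵥ (y - ybar) - lam) ⬝ᵥ (A *ᵥ y + B *ᵥ u)) := by
  have hR' : R.IsSymm := isHermitian_iff_isSymm.1 hR.isHermitian
  have hdyn : A *ᵥ y + B *ᵥ u = A *ᵥ (y - ybar) + B *ᵥ (u - ubar) := by
    rw [mulVec_sub, mulVec_sub]; linear_combination hKKT.feasible
  have hlin : Q *ᵥ (ybar - yd) ⬝ᵥ (y - ybar) + R *ᵥ (ubar - ud) ⬝ᵥ (u - ubar) =
      lam ⬝ᵥ (A *ᵥ (y - ybar) + B *ᵥ (u - ubar)) := by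
    rw [hKKT.state_eq, hKKT.control_eq, dotProduct_comm, dotProduct_transpose_mulVec,
      dotProduct_comm (Bᵀ *ᵥ lam), dotProduct_transpose_mulVec, dotProduct_add]
  rw [shiftedCost_eq_deviations hQ hR', hlin, hdyn, sub_dotProduct,
    ← riccati_complete_square hR' hR.det_pos.ne'.isUnit hS hARE]
  ring

theorem HasDerivWithinAt.riccatiValue (hS : S.IsSymm) (lam : ι → ℝ) {e : ℝ → ι → ℝ}
    {v : ι → ℝ} {s : Set ℝ} {t : ℝ} (he : HasDerivWithinAt e v s t) :
    HasDerivWithinAt (fun τ => riccatiValue S lam (e τ)) ((S *ᵥ e t - lam) ⬝ᵥ v) s t := by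
  refine ((((he.const_mulVec S).dotProduct he).const_mul (1 / 2)).sub
    ((hasDerivWithinAt_const t s lam).dotProduct he)).congr_deriv ?_
  rw [hS.mulVec_dotProduct_comm v, sub_dotProduct, zero_dotProduct]
  ring

theorem tendsto_riccatiValue_atTop {y : ℝ → ι → ℝ} (hlim : Tendsto y atTop (𝓝 ybar)) :
    Tendsto (fun t => riccatiValue S lam (y t - ybar)) atTop (𝓝 0) := by
  have hcont : Continuous (riccatiValue S lam) := by unfold riccatiValue; fun_prop
  have h := (hcont.tendsto _).comp (hlim.sub_const ybar)
  rwa [sub_self, show riccatiValue S lam 0 = 0 by simp [riccatiValue]] at h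

theorem two_mul_riccatiValue_le_integral_shiftedCost (hQ : Q.IsSymm) (hR : R.PosDef)
    (hS : S.IsSymm) (hARE : Aᵀ * S + S * A - S * B * R⁻¹ * Bᵀ * S = -Q)
    (hKKT : IsKKTTriple A B Q R yd ud ybar ubar lam) {y : ℝ → ι → ℝ} {u : ℝ → κ → ℝ}
    (hy : ∀ t ∈ Ici (0 : ℝ), HasDerivWithinAt y (A *ᵥ y t + B *ᵥ u t) (Ici 0) t)
    (hlim : Tendsto y atTop (𝓝 ybar))
    (hint : IntegrableOn (fun t => shiftedCost Q R yd ud ybar ubar (y t) (u t)) (Ioi 0)) :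
    2 * riccatiValue S lam (y 0 - ybar) ≤
      ∫ t in Ioi 0, shiftedCost Q R yd ud ybar ubar (y t) (u t) := by
  have h := sub_le_integral_Ioi_of_hasDerivWithinAt_of_tendsto
    (fun t ht => (((hy t ht).sub_const ybar).riccatiValue hS lam).const_mul (-2)) hint
    (fun t _ => ?_) (by simpa using (tendsto_riccatiValue_atTop hlim).const_mul (-2))
  · linarith
  · have hz := hR.posSemidef.dotProduct_mulVec_nonneg
      (u t - ubar + (R⁻¹ * Bᵀ * S) *ᵥ (y t - ybar))
    rw [star_trivial, dotProduct_comm] at hz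
    rw [shiftedCost_eq_completedSquare hQ hR hS hARE hKKT]
    linarith

theorem integral_shiftedCost_eq_of_feedback (hQ : Q.IsSymm) (hR : R.PosDef)
    (hS : S.IsSymm) (hARE : Aᵀ * S + S * A - S * B * R⁻¹ * Bᵀ * S = -Q)
    (hKKT : IsKKTTriple A B Q R yd ud ybar ubar lam) {y : ℝ → ι → ℝ} {u : ℝ → κ → ℝ}
    (hy : ∀ t ∈ Ici (0 : ℝ), HasDerivWithinAt y (A *ᵥ y t + B *ᵥ u t) (Ici 0) t)
    (hlim : Tendsto y atTop (𝓝 ybar))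
    (hint : IntegrableOn (fun t => shiftedCost Q R yd ud ybar ubar (y t) (u t)) (Ioi 0))
    (hfb : ∀ t, u t = ubar - (R⁻¹ * Bᵀ * S) *ᵥ (y t - ybar)) :
    ∫ t in Ioi 0, shiftedCost Q R yd ud ybar ubar (y t) (u t) =
      2 * riccatiValue S lam (y 0 - ybar) := by
  have hderiv := fun t (ht : t ∈ Ici (0 : ℝ)) =>
    (((hy t ht).sub_const ybar).riccatiValue hS lam).const_mul (-2)
  have hcost : ∀ t, shiftedCost Q R yd ud ybar ubar (y t) (u t) =
      -2 * ((S *ᵥ (y t - ybar) - lam) ⬝ᵥ (A *ᵥ y t + B *ᵥ u t)) := fun t => by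
    rw [shiftedCost_eq_completedSquare hQ hR hS hARE hKKT, hfb t, sub_sub_cancel_left,
      neg_add_cancel, mulVec_zero, zero_dotProduct]
    ring
  simp only [hcost] at hint ⊢
  rw [integral_Ioi_of_hasDerivAt_of_tendsto (hderiv 0 self_mem_Ici).continuousWithinAt
    (fun t ht => (hderiv t (Ioi_subset_Ici_self ht)).hasDerivAt (Ici_mem_nhds ht)) hint
    (by simpa using (tendsto_riccatiValue_atTop hlim).const_mul (-2))]
  ring

theorem riccatiValue_le_of_mem_admissibleCosts (hQ : Q.IsSymm) (hR : R.PosDef)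
    (hS : S.IsSymm) (hARE : Aᵀ * S + S * A - S * B * R⁻¹ * Bᵀ * S = -Q)
    (hKKT : IsKKTTriple A B Q R yd ud ybar ubar lam) {y₀ : ι → ℝ} {c : ℝ}
    (hc : c ∈ admissibleCosts A B Q R yd ud ybar ubar y₀) :
    riccatiValue S lam (y₀ - ybar) ≤ c := by
  obtain ⟨y, u, hy, -, rfl, hlim, hquad, hlin, rfl⟩ := hc
  have := two_mul_riccatiValue_le_integral_shiftedCost hQ hR hS hARE hKKT hy hlim
    (integrableOn_shiftedCost hQ (isHermitian_iff_isSymm.1 hR.isHermitian) hquad hlin)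
  linarith

variable [DecidableEq ι]

theorem riccatiValue_mem_admissibleCosts (hQ : Q.IsSymm) (hR : R.PosDef)
    (hS : S.IsSymm) (hARE : Aᵀ * S + S * A - S * B * R⁻¹ * Bᵀ * S = -Q)
    (hKKT : IsKKTTriple A B Q R yd ud ybar ubar lam) {ν : ℝ} (hν : 0 < ν)
    (hstab : ∀ x, (fun t : ℝ => NormedSpace.exp (t • (A - B * R⁻¹ * Bᵀ * S)) *ᵥ x)
      =O[atTop] fun t => Real.exp (-ν * t))
    (y₀ : ι → ℝ) :
    riccatiValue S lam (y₀ - ybar) ∈ admissibleCosts A B Q R yd ud ybar ubar y₀ := by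
  set G := R⁻¹ * Bᵀ * S
  set e := fun t : ℝ => NormedSpace.exp (t • (A - B * R⁻¹ * Bᵀ * S)) *ᵥ (y₀ - ybar)
  have he : ∀ t, HasDerivAt e ((A - B * R⁻¹ * Bᵀ * S) *ᵥ e t) t :=
    hasDerivAt_exp_smul_mulVec _ _
  have hec : Continuous e := continuous_iff_continuousAt.2 fun t => (he t).continuousAt
  have hO : e =O[atTop] fun t => Real.exp (-ν * t) := hstab _
  obtain ⟨hquad, hlin⟩ := integrableOn_deviationCosts_of_isBigO (Q := Q) (R := R) (yd := yd)
    (ud := ud) (ybar := ybar) (ubar := ubar) (y := fun t => ybar + e t)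
    (u := fun t => ubar - G *ᵥ e t) hν (by fun_prop) (by fun_prop) (by simpa using hO)
    (by simpa using (hO.const_mulVec G).neg_left)
  have hy : ∀ t ∈ Ici (0 : ℝ), HasDerivWithinAt (fun t => ybar + e t)
      (A *ᵥ (ybar + e t) + B *ᵥ (ubar - G *ᵥ e t)) (Ici 0) t := fun t _ => by
    refine ((he t).const_add ybar).hasDerivWithinAt.congr_deriv ?_
    rw [sub_mulVec, mulVec_add, mulVec_sub, mulVec_mulVec (e t) B G]
    simp only [G, Matrix.mul_assoc]
    linear_combination -hKKT.feasible
  have hlim : Tendsto (fun t => ybar + e t) atTop (𝓝 ybar) := by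
    simpa using (hO.trans_tendsto <| Real.tendsto_exp_atBot.comp <|
      tendsto_id.const_mul_atTop_of_neg (neg_lt_zero.2 hν)).const_add ybar
  have hy0 : ybar + e 0 = y₀ := by simp [e]
  refine ⟨_, _, hy, by fun_prop, hy0, hlim, hquad, hlin, ?_⟩
  rw [integral_shiftedCost_eq_of_feedback hQ hR hS hARE hKKT hy hlim
    (integrableOn_shiftedCost hQ (isHermitian_iff_isSymm.1 hR.isHermitian) hquad hlin)
    fun t => by simp [G], hy0]
  ring

theorem sInf_admissibleCosts (hQ : Q.IsSymm) (hR : R.PosDef)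
    (hS : S.IsSymm) (hARE : Aᵀ * S + S * A - S * B * R⁻¹ * Bᵀ * S = -Q)
    (hKKT : IsKKTTriple A B Q R yd ud ybar ubar lam) {ν : ℝ} (hν : 0 < ν)
    (hstab : ∀ x, (fun t : ℝ => NormedSpace.exp (t • (A - B * R⁻¹ * Bᵀ * S)) *ᵥ x)
      =O[atTop] fun t => Real.exp (-ν * t))
    (y₀ : ι → ℝ) :
    sInf (admissibleCosts A B Q R yd ud ybar ubar y₀) = riccatiValue S lam (y₀ - ybar) :=
  IsLeast.csInf_eq ⟨riccatiValue_mem_admissibleCosts hQ hR hS hARE hKKT hν hstab y₀,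
    fun _ hc => riccatiValue_le_of_mem_admissibleCosts hQ hR hS hARE hKKT hc⟩

end LinearQuadratic

end

theorem Vf_Vb_identification_general
    (n m : ℕ)
    (A : Matrix (Fin n) (Fin n) ℝ) (B : Matrix (Fin n) (Fin m) ℝ)
    (Q : Matrix (Fin n) (Fin n) ℝ) (hQ : Q.PosDef)
    (R : Matrix (Fin m) (Fin m) ℝ) (hR : R.PosDef)
    (yd : Fin n → ℝ) (ud : Fin m → ℝ)
    (ybar : Fin n → ℝ) (ubar : Fin m → ℝ) (lambdabar : Fin n → ℝ)
    (hfeas : A.mulVec ybar + B.mulVec ubar = 0)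
    (hKKT1 : Q.mulVec (ybar - yd) = Aᵀ.mulVec lambdabar)
    (hKKT2 : R.mulVec (ubar - ud) = Bᵀ.mulVec lambdabar)
    (P : Matrix (Fin n) (Fin n) ℝ) (hP : P.PosDef)
    (hAREP : Aᵀ * P + P * A - P * B * R⁻¹ * Bᵀ * P = -Q)
    (N : Matrix (Fin n) (Fin n) ℝ) (hNsymm : Nᵀ = N)
    (hAREN : Aᵀ * N + N * A - N * B * R⁻¹ * Bᵀ * N = -Q)
    (M ν : ℝ) (hν : 0 < ν)
    (hstabP : ∀ t : ℝ, 0 ≤ t → ∀ x : Fin n → ℝ,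
      Real.sqrt ((NormedSpace.exp (t • (A - B * R⁻¹ * Bᵀ * P))).mulVec x ⬝ᵥ
          (NormedSpace.exp (t • (A - B * R⁻¹ * Bᵀ * P))).mulVec x)
        ≤ M * Real.exp (-ν * t) * Real.sqrt (x ⬝ᵥ x))
    (hstabN : ∀ t : ℝ, 0 ≤ t → ∀ x : Fin n → ℝ,
      Real.sqrt ((NormedSpace.exp ((-t) • (A - B * R⁻¹ * Bᵀ * N))).mulVec x ⬝ᵥ
          (NormedSpace.exp ((-t) • (A - B * R⁻¹ * Bᵀ * N))).mulVec x)
        ≤ M * Real.exp (-ν * t) * Real.sqrt (x ⬝ᵥ x)) :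
    (∀ y₀ : Fin n → ℝ,
      sInf {c : ℝ | ∃ y : ℝ → Fin n → ℝ, ∃ u : ℝ → Fin m → ℝ,
        (∀ t ∈ Set.Ici (0 : ℝ),
          HasDerivWithinAt y (A.mulVec (y t) + B.mulVec (u t)) (Set.Ici 0) t) ∧
        ContinuousOn u (Set.Ici 0) ∧
        y 0 = y₀ ∧
        Filter.Tendsto y Filter.atTop (nhds ybar) ∧
        IntegrableOn (fun t => Q.mulVec (y t - ybar) ⬝ᵥ (y t - ybar)
          + R.mulVec (u t - ubar) ⬝ᵥ (u t - ubar)) (Set.Ici 0) ∧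
        IntegrableOn (fun t => Q.mulVec (ybar - yd) ⬝ᵥ (y t - ybar)
          + R.mulVec (ubar - ud) ⬝ᵥ (u t - ubar)) (Set.Ici 0) ∧
        c = (1 / 2) * ∫ t in Set.Ioi (0 : ℝ),
          (Q.mulVec (y t - yd) ⬝ᵥ (y t - yd) + R.mulVec (u t - ud) ⬝ᵥ (u t - ud)
            - Q.mulVec (ybar - yd) ⬝ᵥ (ybar - yd) - R.mulVec (ubar - ud) ⬝ᵥ (ubar - ud))}
      = (1 / 2) * (P.mulVec (y₀ - ybar) ⬝ᵥ (y₀ - ybar)) - lambdabar ⬝ᵥ (y₀ - ybar))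
    ∧
    (∀ y₁ : Fin n → ℝ,
      sInf {c : ℝ | ∃ y : ℝ → Fin n → ℝ, ∃ u : ℝ → Fin m → ℝ,
        (∀ t ∈ Set.Ici (0 : ℝ),
          HasDerivWithinAt y (-(A.mulVec (y t)) - B.mulVec (u t)) (Set.Ici 0) t) ∧
        ContinuousOn u (Set.Ici 0) ∧
        y 0 = y₁ ∧
        Filter.Tendsto y Filter.atTop (nhds ybar) ∧
        IntegrableOn (fun t => Q.mulVec (y t - ybar) ⬝ᵥ (y t - ybar)
          + R.mulVec (u t - ubar) ⬝ᵥ (u t - ubar)) (Set.Ici 0) ∧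
        IntegrableOn (fun t => Q.mulVec (ybar - yd) ⬝ᵥ (y t - ybar)
          + R.mulVec (ubar - ud) ⬝ᵥ (u t - ubar)) (Set.Ici 0) ∧
        c = (1 / 2) * ∫ t in Set.Ioi (0 : ℝ),
          (Q.mulVec (y t - yd) ⬝ᵥ (y t - yd) + R.mulVec (u t - ud) ⬝ᵥ (u t - ud)
            - Q.mulVec (ybar - yd) ⬝ᵥ (ybar - yd) - R.mulVec (ubar - ud) ⬝ᵥ (ubar - ud))}
      = -(1 / 2) * (N.mulVec (y₁ - ybar) ⬝ᵥ (y₁ - ybar)) + lambdabar ⬝ᵥ (y₁ - ybar)) := by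
  have hQ' : Q.IsSymm := isHermitian_iff_isSymm.1 hQ.isHermitian
  have hKKT : IsKKTTriple A B Q R yd ud ybar ubar lambdabar := ⟨hfeas, hKKT1, hKKT2⟩
  refine ⟨sInf_admissibleCosts hQ' hR (isHermitian_iff_isSymm.1 hP.isHermitian) hAREP hKKT hν
    fun x => isBigO_exp_neg_of_sqrt_dotProduct_le fun t ht => hstabP t ht x, fun y₁ => ?_⟩
  have hAREN' : (-A)ᵀ * -N + -N * -A - -N * -B * R⁻¹ * (-B)ᵀ * -N = -Q := by
    simpa only [transpose_neg, Matrix.neg_mul, Matrix.mul_neg, neg_neg] using hAREN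
  have hloop : ∀ t : ℝ, t • (-A - -B * R⁻¹ * (-B)ᵀ * -N) = (-t) • (A - B * R⁻¹ * Bᵀ * N) := by
    intro t
    simp only [transpose_neg, Matrix.neg_mul, Matrix.mul_neg, neg_neg, neg_smul, smul_sub, smul_neg]
  have h := sInf_admissibleCosts hQ' hR (Matrix.IsSymm.neg hNsymm) hAREN' hKKT.neg hν
    (fun x => isBigO_exp_neg_of_sqrt_dotProduct_le fun t ht => by
      rw [hloop]; exact hstabN t ht x) y₁
  simp only [admissibleCosts, shiftedCost, riccatiValue, neg_mulVec, neg_dotProduct,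
    ← sub_eq_add_neg] at h
  rw [h]
  ring

/-- identification of the forward and backward shifted optimal values
`V_f(y₀) = ½⟨P(y₀−ȳ), y₀−ȳ⟩ − ⟨λ̄, y₀−ȳ⟩` and
`V_b(y₁) = −½⟨N(y₁−ȳ), y₁−ȳ⟩ + ⟨λ̄, y₁−ȳ⟩`. Infima are taken (as `sInf` in ℝ) over the
costs of all admissible pairs. Operator norm bounds are expressed through the action on
vectors with the Euclidean norm `√(x ⬝ᵥ x)`. -/
theorem Vf_Vb_identification
    (n m : ℕ) (hn : 1 ≤ n) (hm : 1 ≤ m)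
    (A : Matrix (Fin n) (Fin n) ℝ) (B : Matrix (Fin n) (Fin m) ℝ)
    (Q : Matrix (Fin n) (Fin n) ℝ) (hQ : Q.PosDef)
    (R : Matrix (Fin m) (Fin m) ℝ) (hR : R.PosDef)
    (yd : Fin n → ℝ) (ud : Fin m → ℝ)
    (ybar : Fin n → ℝ) (ubar : Fin m → ℝ) (lambdabar : Fin n → ℝ)
    (hfeas : A.mulVec ybar + B.mulVec ubar = 0)
    (hKKT1 : Q.mulVec (ybar - yd) = Aᵀ.mulVec lambdabar)
    (hKKT2 : R.mulVec (ubar - ud) = Bᵀ.mulVec lambdabar)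
    (P : Matrix (Fin n) (Fin n) ℝ) (hP : P.PosDef)
    (hAREP : Aᵀ * P + P * A - P * B * R⁻¹ * Bᵀ * P = -Q)
    (N : Matrix (Fin n) (Fin n) ℝ) (hN : (-N).PosDef) (hNsymm : Nᵀ = N)
    (hAREN : Aᵀ * N + N * A - N * B * R⁻¹ * Bᵀ * N = -Q)
    (M ν : ℝ) (hM : 1 ≤ M) (hν : 0 < ν)
    (hstabP : ∀ t : ℝ, 0 ≤ t → ∀ x : Fin n → ℝ,
      Real.sqrt ((NormedSpace.exp (t • (A - B * R⁻¹ * Bᵀ * P))).mulVec x ⬝ᵥ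
          (NormedSpace.exp (t • (A - B * R⁻¹ * Bᵀ * P))).mulVec x)
        ≤ M * Real.exp (-ν * t) * Real.sqrt (x ⬝ᵥ x))
    (hstabN : ∀ t : ℝ, 0 ≤ t → ∀ x : Fin n → ℝ,
      Real.sqrt ((NormedSpace.exp ((-t) • (A - B * R⁻¹ * Bᵀ * N))).mulVec x ⬝ᵥ
          (NormedSpace.exp ((-t) • (A - B * R⁻¹ * Bᵀ * N))).mulVec x)
        ≤ M * Real.exp (-ν * t) * Real.sqrt (x ⬝ᵥ x)) :
    (∀ y₀ : Fin n → ℝ,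
      sInf {c : ℝ | ∃ y : ℝ → Fin n → ℝ, ∃ u : ℝ → Fin m → ℝ,
        (∀ t ∈ Set.Ici (0 : ℝ),
          HasDerivWithinAt y (A.mulVec (y t) + B.mulVec (u t)) (Set.Ici 0) t) ∧
        ContinuousOn u (Set.Ici 0) ∧
        y 0 = y₀ ∧
        Filter.Tendsto y Filter.atTop (nhds ybar) ∧
        IntegrableOn (fun t => Q.mulVec (y t - ybar) ⬝ᵥ (y t - ybar)
          + R.mulVec (u t - ubar) ⬝ᵥ (u t - ubar)) (Set.Ici 0) ∧
        IntegrableOn (fun t => Q.mulVec (ybar - yd) ⬝ᵥ (y t - ybar)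
          + R.mulVec (ubar - ud) ⬝ᵥ (u t - ubar)) (Set.Ici 0) ∧
        c = (1 / 2) * ∫ t in Set.Ioi (0 : ℝ),
          (Q.mulVec (y t - yd) ⬝ᵥ (y t - yd) + R.mulVec (u t - ud) ⬝ᵥ (u t - ud)
            - Q.mulVec (ybar - yd) ⬝ᵥ (ybar - yd) - R.mulVec (ubar - ud) ⬝ᵥ (ubar - ud))}
      = (1 / 2) * (P.mulVec (y₀ - ybar) ⬝ᵥ (y₀ - ybar)) - lambdabar ⬝ᵥ (y₀ - ybar))
    ∧
    (∀ y₁ : Fin n → ℝ,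
      sInf {c : ℝ | ∃ y : ℝ → Fin n → ℝ, ∃ u : ℝ → Fin m → ℝ,
        (∀ t ∈ Set.Ici (0 : ℝ),
          HasDerivWithinAt y (-(A.mulVec (y t)) - B.mulVec (u t)) (Set.Ici 0) t) ∧
        ContinuousOn u (Set.Ici 0) ∧
        y 0 = y₁ ∧
        Filter.Tendsto y Filter.atTop (nhds ybar) ∧
        IntegrableOn (fun t => Q.mulVec (y t - ybar) ⬝ᵥ (y t - ybar)
          + R.mulVec (u t - ubar) ⬝ᵥ (u t - ubar)) (Set.Ici 0) ∧
        IntegrableOn (fun t => Q.mulVec (ybar - yd) ⬝ᵥ (y t - ybar)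
          + R.mulVec (ubar - ud) ⬝ᵥ (u t - ubar)) (Set.Ici 0) ∧
        c = (1 / 2) * ∫ t in Set.Ioi (0 : ℝ),
          (Q.mulVec (y t - yd) ⬝ᵥ (y t - yd) + R.mulVec (u t - ud) ⬝ᵥ (u t - ud)
            - Q.mulVec (ybar - yd) ⬝ᵥ (ybar - yd) - R.mulVec (ubar - ud) ⬝ᵥ (ubar - ud))}
      = -(1 / 2) * (N.mulVec (y₁ - ybar) ⬝ᵥ (y₁ - ybar)) + lambdabar ⬝ᵥ (y₁ - ybar)) :=
  Vf_Vb_identification_general n m A B Q hQ R hR yd ud ybar ubar lambdabar hfeas hKKT1 hKKT2 P hP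
    hAREP N hNsymm hAREN M ν hν hstabP hstabN
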